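/- For any odd n ≥ 3, there exists a boolean function κ : 𝔹^n → 𝔹 and a point v ∈ 𝔹^n such that feature n is relevant for the instance (v, κ(v)) yet its Shapley value Sv(n) equals zero. -/

import Mathlib

open Finset

/-- `X` is a weak abductive explanation (weak AXp) for classifier `κ` at point `v`:
every point agreeing with `v` on `X` gets the same prediction as `v`. -/
def weakAXp {n : ℕ} (κ : (Fin n → Bool) → Bool) (v : Fin n → Bool)
    (X : Finset (Fin n)) : Prop :=
  ∀ x : Fin n → Bool, (∀ i ∈ X, x i = v i) → κ x = κ v

/-- `X` is an AXp: a subset-minimal weak AXp. -/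
def AXp {n : ℕ} (κ : (Fin n → Bool) → Bool) (v : Fin n → Bool)
    (X : Finset (Fin n)) : Prop :=
  weakAXp κ v X ∧ ∀ X' ⊂ X, ¬ weakAXp κ v X'

/-- `Y` is a weak contrastive explanation (weak CXp) for `κ` at `v`:
some point agreeing with `v` outside `Y` gets a different prediction. -/
def weakCXp {n : ℕ} (κ : (Fin n → Bool) → Bool) (v : Fin n → Bool)
    (Y : Finset (Fin n)) : Prop :=
  ∃ x : Fin n → Bool, (∀ i ∉ Y, x i = v i) ∧ κ x ≠ κ v

/-- `Y` is a CXp: a subset-minimal weak CXp. -/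
def CXp {n : ℕ} (κ : (Fin n → Bool) → Bool) (v : Fin n → Bool)
    (Y : Finset (Fin n)) : Prop :=
  weakCXp κ v Y ∧ ∀ Y' ⊂ Y, ¬ weakCXp κ v Y'

/-- A feature is relevant if it occurs in some AXp. -/
def Relevant {n : ℕ} (κ : (Fin n → Bool) → Bool) (v : Fin n → Bool) (i : Fin n) : Prop :=
  ∃ X, AXp κ v X ∧ i ∈ X

/-- A feature is irrelevant if it occurs in no AXp. -/
def Irrelevant {n : ℕ} (κ : (Fin n → Bool) → Bool) (v : Fin n → Bool) (i : Fin n) : Prop :=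
  ¬ Relevant κ v i

/-- `phi κ v S` : average value of `κ` over points agreeing with `v` on `S`
(uniform distribution). -/
noncomputable def phi {n : ℕ} (κ : (Fin n → Bool) → Bool) (v : Fin n → Bool)
    (S : Finset (Fin n)) : ℝ :=
  (1 / 2 ^ (n - S.card)) *
    ∑ x ∈ Finset.univ.filter (fun x : Fin n → Bool => ∀ i ∈ S, x i = v i),
      (if κ x then (1 : ℝ) else 0)

/-- Shapley value of feature `i` for classifier `κ` at point `v`. -/
noncomputable def Sv {n : ℕ} (κ : (Fin n → Bool) → Bool) (v : Fin n → Bool)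
    (i : Fin n) : ℝ :=
  ∑ S ∈ (Finset.univ.erase i).powerset,
    ((S.card.factorial * (n - S.card - 1).factorial : ℝ) / n.factorial) *
      (phi κ v (insert i S) - phi κ v S)

/-!
Let `κ` be the indicator of the two points `1_{a,b}` and `1_{c}` (three distinct features) and
`v = 0`, so `κ v = false`. Fixing `b` and `c` to `0` excludes both points, and fixing just one
of them leaves the other available, so `{b, c}` is an AXp and `b` is relevant. For `b ∉ S`
the marginal contribution of `b` is `2^{-(n-|S|)} ([c ∉ S] - [a ∉ S])`, which changes sign when
`a` and `c` are swapped; since the Shapley weights depend only on `|S|`, the transposition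
`(a c)` pairs the terms of `Sv b` so that they cancel.
-/

section Explanations

variable {n : ℕ} {κ : (Fin n → Bool) → Bool} {v : Fin n → Bool}

theorem weakAXp.mono {X Y : Finset (Fin n)} (hX : weakAXp κ v X) (hXY : X ⊆ Y) :
    weakAXp κ v Y :=
  fun x hx => hX x fun i hi => hx i (hXY hi)

theorem AXp_of_forall_not_weakAXp_erase {X : Finset (Fin n)} (hX : weakAXp κ v X)
    (hmin : ∀ i ∈ X, ¬ weakAXp κ v (X.erase i)) : AXp κ v X := by
  refine ⟨hX, fun X' hX' hw => ?_⟩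
  obtain ⟨i, hi, hX'i⟩ := ssubset_iff_exists_subset_erase.mp hX'
  exact hmin i hi (hw.mono hX'i)

end Explanations

theorem Sv_eq_zero_of_marginal_antisymm {n : ℕ} (κ : (Fin n → Bool) → Bool)
    (v : Fin n → Bool) {i : Fin n} (σ : Equiv.Perm (Fin n)) (hσi : σ i = i)
    (h : ∀ S : Finset (Fin n), i ∉ S →
      phi κ v (insert i (S.map σ.toEmbedding)) - phi κ v (S.map σ.toEmbedding) =
        -(phi κ v (insert i S) - phi κ v S)) :
    Sv κ v i = 0 := by
  have hneg : Sv κ v i = -Sv κ v i := by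
    unfold Sv
    rw [← sum_neg_distrib]
    refine sum_equiv σ.finsetCongr (fun S => ?_) (fun S hS => ?_)
    · have hσi' : σ.symm i = i := σ.symm_apply_eq.mpr hσi.symm
      simp [Equiv.finsetCongr_apply, subset_erase, mem_map_equiv, hσi']
    · have hiS : i ∉ S := by simpa [subset_erase] using hS
      rw [Equiv.finsetCongr_apply, card_map, h S hiS]
      ring
  linarith

def indicatorVec {n : ℕ} (A : Finset (Fin n)) : Fin n → Bool := fun j => decide (j ∈ A)

theorem indicatorVec_eq_false_on_iff {n : ℕ} (A S : Finset (Fin n)) :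
    (∀ i ∈ S, indicatorVec A i = false) ↔ Disjoint S A := by
  simp [indicatorVec, Finset.disjoint_left]

theorem phi_decide_mem {n : ℕ} (T : Finset (Fin n → Bool)) (v : Fin n → Bool)
    (S : Finset (Fin n)) :
    phi (fun x => decide (x ∈ T)) v S =
      (1 / 2 ^ (n - S.card)) * #{x ∈ T | ∀ i ∈ S, x i = v i} := by
  unfold phi
  simp only [decide_eq_true_eq]
  rw [sum_boole, filter_filter]
  congr 3
  ext x
  simp [and_comm]

section TwoPointClassifier

variable {n : ℕ} {a b c : Fin n}

def twoPointClassifier (a b c : Fin n) : (Fin n → Bool) → Bool :=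
  fun x => decide (x ∈ ({indicatorVec {a, b}, indicatorVec {c}} : Finset (Fin n → Bool)))

theorem indicatorVec_pair_ne_singleton (hac : a ≠ c) :
    indicatorVec {a, b} ≠ indicatorVec {c} := by
  intro h
  simpa [indicatorVec, hac] using congrFun h a

theorem twoPointClassifier_eq_false (x : Fin n → Bool) (hxb : x b = false) (hxc : x c = false) :
    twoPointClassifier a b c x = false := by
  simp only [twoPointClassifier, decide_eq_false_iff_not, mem_insert, mem_singleton, not_or]
  constructor <;> rintro rfl <;> simp [indicatorVec] at hxb hxc

theorem relevant_twoPointClassifier (hac : a ≠ c) (hbc : b ≠ c) :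
    Relevant (twoPointClassifier a b c) (fun _ => false) b := by
  have hκ₀ := twoPointClassifier_eq_false (a := a) (b := b) (c := c) (fun _ => false) rfl rfl
  refine ⟨{b, c}, AXp_of_forall_not_weakAXp_erase ?_ ?_, mem_insert_self b {c}⟩
  · intro x hx
    rw [hκ₀, twoPointClassifier_eq_false x (hx b (by simp)) (hx c (by simp))]
  · simp only [mem_insert, mem_singleton, forall_eq_or_imp, forall_eq]
    constructor
    · intro hw
      have := (hw (indicatorVec {a, b}) <| (indicatorVec_eq_false_on_iff _ _).mpr <| by
        simp [erase_insert (notMem_singleton.mpr hbc), hac.symm, hbc.symm]).trans hκ₀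
      simp [twoPointClassifier] at this
    · intro hw
      have := (hw (indicatorVec {c}) <| (indicatorVec_eq_false_on_iff _ _).mpr <| by
        simp [erase_insert_of_ne hbc, hbc]).trans hκ₀
      simp [twoPointClassifier] at this

theorem phi_twoPointClassifier (hac : a ≠ c) (S : Finset (Fin n)) :
    phi (twoPointClassifier a b c) (fun _ => false) S =
      (1 / 2 ^ (n - S.card)) *
        ((if Disjoint S {a, b} then 1 else 0) + (if c ∉ S then 1 else 0)) := by
  unfold twoPointClassifier
  rw [phi_decide_mem, card_filter, sum_pair (indicatorVec_pair_ne_singleton hac)]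
  push_cast [indicatorVec_eq_false_on_iff, disjoint_singleton_right]
  rfl

theorem marginal_twoPointClassifier (hac : a ≠ c) (hbc : b ≠ c) {S : Finset (Fin n)}
    (hbS : b ∉ S) :
    phi (twoPointClassifier a b c) (fun _ => false) (insert b S) -
        phi (twoPointClassifier a b c) (fun _ => false) S =
      (1 / 2 ^ (n - S.card)) * ((if c ∉ S then 1 else 0) - (if a ∉ S then 1 else 0)) := by
  have hcard : n - S.card = n - (insert b S).card + 1 := by
    have : S.card < n := by simpa using card_lt_univ_of_notMem hbS
    rw [card_insert_of_notMem hbS]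
    omega
  rw [phi_twoPointClassifier hac, phi_twoPointClassifier hac, hcard, pow_succ]
  have hbSab : ¬ Disjoint (insert b S) {a, b} := by simp
  have hSab : Disjoint S {a, b} ↔ a ∉ S := by simp [hbS]
  have hcbS : c ∉ insert b S ↔ c ∉ S := by simp [hbc.symm]
  simp only [hbSab, hSab, hcbS, if_false]
  split_ifs <;> field_simp <;> ring

theorem Sv_twoPointClassifier (hab : a ≠ b) (hac : a ≠ c) (hbc : b ≠ c) :
    Sv (twoPointClassifier a b c) (fun _ => false) b = 0 := by
  refine Sv_eq_zero_of_marginal_antisymm _ _ (Equiv.swap a c)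
    (Equiv.swap_apply_of_ne_of_ne hab.symm hbc) fun S hbS => ?_
  have hbS' : b ∉ S.map (Equiv.swap a c).toEmbedding := by
    simp [mem_map_equiv, Equiv.swap_apply_of_ne_of_ne hab.symm hbc, hbS]
  rw [marginal_twoPointClassifier hac hbc hbS, marginal_twoPointClassifier hac hbc hbS']
  simp [mem_map_equiv]
  ring

end TwoPointClassifier

/-- Issue I3: for any odd `n ≥ 3` there is a boolean function and a point for which
feature `n` is relevant yet has Shapley value zero. -/
theorem stmt6 (n : ℕ) (hn : 3 ≤ n) :
    ∃ (κ : (Fin n → Bool) → Bool) (v : Fin n → Bool),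
      Relevant κ v ⟨n - 1, by omega⟩ ∧ Sv κ v ⟨n - 1, by omega⟩ = 0 := by
  have hab : (⟨0, by omega⟩ : Fin n) ≠ ⟨n - 1, by omega⟩ := by rw [Ne, Fin.mk.injEq]; omega
  have hac : (⟨0, by omega⟩ : Fin n) ≠ ⟨1, by omega⟩ := by rw [Ne, Fin.mk.injEq]; omega
  have hbc : (⟨n - 1, by omega⟩ : Fin n) ≠ ⟨1, by omega⟩ := by rw [Ne, Fin.mk.injEq]; omega
  exact ⟨twoPointClassifier _ _ _, fun _ => false,
    relevant_twoPointClassifier hac hbc, Sv_twoPointClassifier hab hac hbc⟩
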